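/- arXiv:math/0608651 — 8 statements merged into one kernel-verified Lean document; each statement's English description precedes it below -/
import Mathlib

section
/- Let M₁, ..., M_q ∈ SL(n, ℂ) with n ≥ 2, and define L(X) = (X M₁ − (M₁*)⁻¹ X, ..., X M_q − (M_q*)⁻¹ X). Suppose for some indices i, j the pair {M_i, M_j} is irreducible, and suppose there exists C ∈ SL(n, ℂ) such that C M_k C⁻¹ is unitary for all k. Then the kernel of L has complex dimension exactly 1; more precisely, ker L = ℂ·(C*C). -/
/-! If `C M_k C⁻¹` is unitary then every `M_k` preserves the Hermitian form `P = CᴴC`, i.e.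
`M_kᴴ P M_k = P`, so `(M_kᴴ)⁻¹ = P M_k P⁻¹`. Hence `X M_k = (M_kᴴ)⁻¹ X` says exactly that `P⁻¹ X`
commutes with `M_k`, and by Schur's lemma for the irreducible pair `{M_i, M_j}` such a `P⁻¹ X` is
a scalar. -/

open Matrix

namespace Matrix

variable {ι : Type*} [Fintype ι] [DecidableEq ι]

section CommRing

variable {R : Type*} [CommRing R]

theorem conjTranspose_mul_mul_eq_of_mem_unitaryGroup [StarRing R] {C M : Matrix ι ι R}
    (hC : IsUnit C.det) (hU : C * M * C⁻¹ ∈ unitaryGroup ι R) : Mᴴ * (Cᴴ * C) * M = Cᴴ * C := by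
  have hU' : (C⁻¹)ᴴ * (Mᴴ * (Cᴴ * C) * M) * C⁻¹ = 1 := by
    simpa only [star_eq_conjTranspose, conjTranspose_mul, Matrix.mul_assoc]
      using mem_unitaryGroup_iff'.mp hU
  have hCC : Cᴴ * (C⁻¹)ᴴ = 1 := by
    rw [← conjTranspose_mul, nonsing_inv_mul C hC, conjTranspose_one]
  calc Mᴴ * (Cᴴ * C) * M
      = Cᴴ * (C⁻¹)ᴴ * (Mᴴ * (Cᴴ * C) * M) * (C⁻¹ * C) := by
        rw [hCC, nonsing_inv_mul C hC, Matrix.one_mul, Matrix.mul_one]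
    _ = Cᴴ * ((C⁻¹)ᴴ * (Mᴴ * (Cᴴ * C) * M) * C⁻¹) * C := by
        simp only [Matrix.mul_assoc]
    _ = Cᴴ * C := by rw [hU', Matrix.mul_one]

theorem inv_eq_mul_mul_inv_of_mul_mul_eq {N P M : Matrix ι ι R} (hP : IsUnit P.det)
    (h : N * P * M = P) : N⁻¹ = P * M * P⁻¹ :=
  inv_eq_right_inv <| by rw [← Matrix.mul_assoc, ← Matrix.mul_assoc, h, mul_nonsing_inv P hP]

theorem mul_sub_inv_mul_eq_zero_iff_commute {N P M X : Matrix ι ι R} (hP : IsUnit P.det)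
    (h : N * P * M = P) : X * M - N⁻¹ * X = 0 ↔ Commute (P⁻¹ * X) M := by
  have hPinv : IsUnit P⁻¹ := (isUnit_iff_isUnit_det _).mpr (isUnit_nonsing_inv_det P hP)
  rw [inv_eq_mul_mul_inv_of_mul_mul_eq hP h, sub_eq_zero, Commute, SemiconjBy,
    ← hPinv.mul_right_inj]
  simp only [Matrix.mul_assoc, nonsing_inv_mul_cancel_left P _ hP]

end CommRing

section Schur

variable {K : Type*} [Field K]

def IsIrreduciblePair (A B : Matrix ι ι K) : Prop :=
  ¬ ∃ V : Submodule K (ι → K), V ≠ ⊥ ∧ V ≠ ⊤ ∧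
    (∀ v ∈ V, A.mulVec v ∈ V) ∧ (∀ v ∈ V, B.mulVec v ∈ V)

theorem IsIrreduciblePair.exists_eq_smul_one_of_commute [IsAlgClosed K] {A B W : Matrix ι ι K}
    (hAB : IsIrreduciblePair A B) (hA : Commute W A) (hB : Commute W B) :
    ∃ c : K, W = c • 1 := by
  cases isEmpty_or_nonempty ι
  · exact ⟨0, Subsingleton.elim _ _⟩
  obtain ⟨c, hc⟩ := Module.End.exists_eigenvalue (toLin' W)
  have hmaps {N : Matrix ι ι K} (hN : Commute W N) :
      ∀ v ∈ Module.End.eigenspace (toLin' W) c, N *ᵥ v ∈ Module.End.eigenspace (toLin' W) c :=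
    fun v hv => Module.End.mapsTo_genEigenspace_of_comm (hN.map toLinAlgEquiv') c 1 hv
  have htop : Module.End.eigenspace (toLin' W) c = ⊤ := by
    by_contra hne
    exact hAB ⟨_, hc, hne, hmaps hA, hmaps hB⟩
  refine ⟨c, toLin'.injective ?_⟩
  rw [Module.End.eigenspace_def, LinearMap.ker_eq_top, sub_eq_zero] at htop
  rw [htop, map_smul, toLin'_one, Module.End.one_eq_id]

end Schur

end Matrix

theorem ker_L_one_dimensional_general {n q : ℕ}
    (M : Fin q → Matrix (Fin n) (Fin n) ℂ)
    (i j : Fin q)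
    (hirr : ¬ ∃ V : Submodule ℂ (Fin n → ℂ), V ≠ ⊥ ∧ V ≠ ⊤ ∧
      (∀ v ∈ V, (M i).mulVec v ∈ V) ∧ (∀ v ∈ V, (M j).mulVec v ∈ V))
    (C : Matrix (Fin n) (Fin n) ℂ) (hC : C.det = 1)
    (hCuni : ∀ k, (C * M k * C⁻¹) ∈ Matrix.unitaryGroup (Fin n) ℂ) :
    ∀ X : Matrix (Fin n) (Fin n) ℂ,
      (∀ k, X * M k - ((M k)ᴴ)⁻¹ * X = 0) ↔ ∃ c : ℂ, X = c • (Cᴴ * C) := by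
  have hCdet : IsUnit C.det := hC ▸ isUnit_one
  have hP : IsUnit (Cᴴ * C).det := by simp [det_conjTranspose, hC]
  intro X
  simp only [mul_sub_inv_mul_eq_zero_iff_commute hP
    (conjTranspose_mul_mul_eq_of_mem_unitaryGroup hCdet (hCuni _))]
  constructor
  · intro hcomm
    obtain ⟨c, hc⟩ := IsIrreduciblePair.exists_eq_smul_one_of_commute hirr (hcomm i) (hcomm j)
    refine ⟨c, ?_⟩
    rw [← mul_nonsing_inv_cancel_left (Cᴴ * C) X hP, hc, Matrix.mul_smul, Matrix.mul_one]
  · rintro ⟨c, rfl⟩ k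
    rw [Matrix.mul_smul, nonsing_inv_mul _ hP]
    exact (Commute.one_left _).smul_left c

/-- If M_i, M_j form an irreducible pair and the M_k are simultaneously
unitarizable by C ∈ SL(n,ℂ), then the kernel of L is exactly ℂ·(CᴴC). -/
theorem ker_L_one_dimensional {n q : ℕ} (hn : 2 ≤ n)
    (M : Fin q → Matrix (Fin n) (Fin n) ℂ) (hM : ∀ k, (M k).det = 1)
    (i j : Fin q)
    (hirr : ¬ ∃ V : Submodule ℂ (Fin n → ℂ), V ≠ ⊥ ∧ V ≠ ⊤ ∧
      (∀ v ∈ V, (M i).mulVec v ∈ V) ∧ (∀ v ∈ V, (M j).mulVec v ∈ V))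
    (C : Matrix (Fin n) (Fin n) ℂ) (hC : C.det = 1)
    (hCuni : ∀ k, (C * M k * C⁻¹) ∈ Matrix.unitaryGroup (Fin n) ℂ) :
    ∀ X : Matrix (Fin n) (Fin n) ℂ,
      (∀ k, X * M k - ((M k)ᴴ)⁻¹ * X = 0) ↔ ∃ c : ℂ, X = c • (Cᴴ * C) :=
  ker_L_one_dimensional_general M i j hirr C hC hCuni
end

section
/- Let M₁, M₂ ∈ SL(n, ℂ) be an irreducible pair that is simultaneously unitarizable (i.e., there exists C ∈ SL(n, ℂ) with C M₁ C⁻¹ and C M₂ C⁻¹ unitary). Let X be a nonzero Hermitian matrix satisfying X M₁ = (M₁*)⁻¹ X and X M₂ = (M₂*)⁻¹ X. Then X is either positive definite or negative definite. -/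
open Matrix
open scoped ComplexOrder

section aux
variable {n : ℕ}

/-- Positive definiteness of `Cᴴ * C` for invertible `C`. -/
lemma aux_posdef_conj (C : Matrix (Fin n) (Fin n) ℂ) (hC : IsUnit C.det) :
    (Cᴴ * C).PosDef := by
  refine PosDef.of_dotProduct_mulVec_pos (isHermitian_conjTranspose_mul_self _) fun x hx => ?_
  have hCx : C.mulVec x ≠ 0 := fun h => hx (by
    have := (mulVec_injective_iff_isUnit.2 (isUnit_iff_isUnit_det C |>.2 hC)) (a₁ := x) (a₂ := 0)
    simpa [mulVec_zero, h] using this)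
  rw [← mulVec_mulVec, dotProduct_mulVec, vecMul_conjTranspose, star_star]
  exact dotProduct_star_self_pos_iff.2 hCx

/-- From unitarity of `C * M * C⁻¹` we get `Mᴴ * (Cᴴ * C) * M = Cᴴ * C`. -/
lemma aux_unif (C M : Matrix (Fin n) (Fin n) ℂ) (hC : IsUnit C.det)
    (h : (C * M * C⁻¹) ∈ Matrix.unitaryGroup (Fin n) ℂ) :
    Mᴴ * (Cᴴ * C) * M = Cᴴ * C := by
  have h' : (C * M * C⁻¹)ᴴ * (C * M * C⁻¹) = 1 := mem_unitaryGroup_iff'.mp h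
  have hCl : C⁻¹ * C = 1 := nonsing_inv_mul C hC
  have hCr : C * C⁻¹ = 1 := mul_nonsing_inv C hC
  have h'' : (C⁻¹)ᴴ * (Mᴴ * (Cᴴ * C) * M) * C⁻¹ = 1 := by
    rw [← h']; simp only [conjTranspose_mul]; noncomm_ring
  have := congrArg (fun Z => Cᴴ * Z * C) h''
  calc Mᴴ * (Cᴴ * C) * M
      = (Cᴴ * (C⁻¹)ᴴ) * (Mᴴ * (Cᴴ * C) * M) * (C⁻¹ * C) := by
        rw [← conjTranspose_mul, hCl, conjTranspose_one]; simp
    _ = Cᴴ * ((C⁻¹)ᴴ * (Mᴴ * (Cᴴ * C) * M) * C⁻¹) * C := by noncomm_ring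
    _ = Cᴴ * C := by rw [h'']; simp
end aux

/-- A nonzero Hermitian element of the kernel of L for an irreducible,
simultaneously unitarizable pair is positive or negative definite. -/
theorem ker_L_hermitian_definite {n : ℕ}
    (M₁ M₂ : Matrix (Fin n) (Fin n) ℂ) (hM₁ : M₁.det = 1) (hM₂ : M₂.det = 1)
    (hirr : ¬ ∃ V : Submodule ℂ (Fin n → ℂ), V ≠ ⊥ ∧ V ≠ ⊤ ∧
      (∀ v ∈ V, M₁.mulVec v ∈ V) ∧ (∀ v ∈ V, M₂.mulVec v ∈ V))
    (C : Matrix (Fin n) (Fin n) ℂ) (hC : C.det = 1)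
    (hC₁ : (C * M₁ * C⁻¹) ∈ Matrix.unitaryGroup (Fin n) ℂ)
    (hC₂ : (C * M₂ * C⁻¹) ∈ Matrix.unitaryGroup (Fin n) ℂ)
    (X : Matrix (Fin n) (Fin n) ℂ) (hX0 : X ≠ 0) (hXh : Xᴴ = X)
    (h₁ : X * M₁ = (M₁ᴴ)⁻¹ * X) (h₂ : X * M₂ = (M₂ᴴ)⁻¹ * X) :
    X.PosDef ∨ (-X).PosDef := by
  -- dispose of n = 0
  rcases Nat.eq_zero_or_pos n with hn | hn
  · exfalso; apply hX0; subst hn; ext i; exact absurd i.2 (by omega)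
  haveI : NeZero n := ⟨by omega⟩
  have hCu : IsUnit C.det := hC ▸ isUnit_one
  have hM₁u : IsUnit M₁.det := hM₁ ▸ isUnit_one
  have hM₂u : IsUnit M₂.det := hM₂ ▸ isUnit_one
  set Y : Matrix (Fin n) (Fin n) ℂ := Cᴴ * C with hY
  have hYpd : Y.PosDef := aux_posdef_conj C hCu
  have hYu : IsUnit Y.det := isUnit_iff_ne_zero.2 (by
    have := hYpd.det_pos; intro h; rw [h] at this; exact lt_irrefl 0 this)
  have key : ∀ (M : Matrix (Fin n) (Fin n) ℂ), IsUnit M.det →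
      Mᴴ * Y * M = Y → X * M = (Mᴴ)⁻¹ * X → (Y⁻¹ * X) * M = M * (Y⁻¹ * X) := by
    intro M hMu hYM hXM
    have hMh : IsUnit Mᴴ.det := by rwa [det_conjTranspose, isUnit_star]
    -- Y * M = (Mᴴ)⁻¹ * Y
    have hYM' : Y * M = (Mᴴ)⁻¹ * Y := by
      have := congrArg (fun Z => (Mᴴ)⁻¹ * Z) hYM
      rw [← this]; rw [← mul_assoc, ← mul_assoc, nonsing_inv_mul _ hMh, one_mul]
    -- so (Mᴴ)⁻¹ = Y * M * Y⁻¹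
    have hinv : (Mᴴ)⁻¹ = Y * M * Y⁻¹ := by
      have h2 := congrArg (fun Z => Z * Y⁻¹) hYM'
      rw [mul_assoc Mᴴ⁻¹ Y Y⁻¹, mul_nonsing_inv _ hYu, mul_one] at h2
      exact h2.symm
    rw [hinv] at hXM
    -- X * M = Y * M * Y⁻¹ * X
    have := congrArg (fun Z => Y⁻¹ * Z) hXM
    rw [← mul_assoc] at this
    calc Y⁻¹ * X * M = Y⁻¹ * (Y * M * Y⁻¹ * X) := this
      _ = (Y⁻¹ * Y) * M * (Y⁻¹ * X) := by noncomm_ring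
      _ = M * (Y⁻¹ * X) := by rw [nonsing_inv_mul _ hYu, one_mul]
  have hk₁ := key M₁ hM₁u (aux_unif C M₁ hCu hC₁) h₁
  have hk₂ := key M₂ hM₂u (aux_unif C M₂ hCu hC₂) h₂
  set A : Matrix (Fin n) (Fin n) ℂ := Y⁻¹ * X with hA
  -- A has an eigenvalue
  obtain ⟨μ, hμ⟩ := Module.End.exists_eigenvalue (Matrix.toLin' A)
  set V := Module.End.eigenspace (Matrix.toLin' A) μ with hV
  have hmem : ∀ v, v ∈ V ↔ A.mulVec v = μ • v := by
    intro v; rw [Module.End.mem_eigenspace_iff]; simp [Matrix.toLin'_apply]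
  have hVbot : V ≠ ⊥ := hμ
  have hinvV : ∀ (M : Matrix (Fin n) (Fin n) ℂ), A * M = M * A →
      ∀ v ∈ V, M.mulVec v ∈ V := by
    intro M hcomm v hv
    rw [hmem] at hv ⊢
    rw [mulVec_mulVec, hcomm, ← mulVec_mulVec, hv, mulVec_smul]
  have hVtop : V = ⊤ := by
    by_contra hne
    exact hirr ⟨V, hVbot, hne, hinvV M₁ hk₁, hinvV M₂ hk₂⟩
  -- hence A = μ • 1
  have hA1 : A = μ • (1 : Matrix (Fin n) (Fin n) ℂ) := by
    apply Matrix.toLin'.injective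
    apply LinearMap.ext; intro v
    have hv : v ∈ V := hVtop ▸ Submodule.mem_top
    rw [hmem] at hv
    simp [Matrix.toLin'_apply, hv, smul_mulVec, one_mulVec]
  have hX : X = μ • Y := by
    have : Y * A = X := by
      rw [hA, ← mul_assoc, mul_nonsing_inv _ hYu, one_mul]
    rw [← this, hA1]; rw [mul_smul_comm, mul_one]
  -- μ is real
  have hμreal : (starRingEnd ℂ) μ = μ := by
    have h1 : (starRingEnd ℂ) μ • Y = μ • Y := by
      have := hXh
      rw [hX] at this
      rwa [conjTranspose_smul, hYpd.isHermitian.eq] at this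
    by_contra hne
    have : ((starRingEnd ℂ) μ - μ) • Y = 0 := by rw [sub_smul, h1, sub_self]
    have hY0 : Y = 0 := by
      have hs : ((starRingEnd ℂ) μ - μ) ≠ 0 := sub_ne_zero.2 hne
      exact (smul_eq_zero.1 this).resolve_left hs
    rw [hY0, det_zero] at hYu
    exact (by simpa using hYu : False)
  have hμ0 : μ ≠ 0 := by
    intro h; apply hX0; rw [hX, h, zero_smul]
  -- μ.re is the real value; split on sign
  obtain ⟨r, hr⟩ : ∃ r : ℝ, μ = (r : ℂ) := by
    refine ⟨μ.re, ?_⟩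
    have := Complex.conj_eq_iff_re.mp hμreal
    exact this.symm
  have hr0 : r ≠ 0 := fun h => hμ0 (by rw [hr, h]; simp)
  have hXmv : ∀ x, star x ⬝ᵥ X.mulVec x = (r : ℂ) * (star x ⬝ᵥ Y.mulVec x) := by
    intro x
    rw [hX, hr, smul_mulVec, dotProduct_smul, smul_eq_mul]
  rcases lt_or_gt_of_ne hr0 with hneg | hpos
  · right
    refine PosDef.of_dotProduct_mulVec_pos (Matrix.IsHermitian.neg hXh) fun x hx => ?_
    rw [neg_mulVec, dotProduct_neg, hXmv, ← neg_mul]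
    have hrc : (0 : ℂ) < -(r : ℂ) := by
      rw [← Complex.ofReal_neg]
      exact_mod_cast neg_pos.2 hneg
    exact mul_pos hrc (hYpd.dotProduct_mulVec_pos hx)
  · left
    refine PosDef.of_dotProduct_mulVec_pos hXh fun x hx => ?_
    rw [hXmv]
    have hrc : (0 : ℂ) < (r : ℂ) := by exact_mod_cast hpos
    exact mul_pos hrc (hYpd.dotProduct_mulVec_pos hx)
end

section
/- For 2×2 complex matrices A and B, the pair {A, B} is irreducible (no common invariant proper nonzero subspace of ℂ²) if and only if the commutator [A, B] = AB − BA is invertible (has rank 2). -/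
open Matrix Module

private lemma comm_mulVec (A B : Matrix (Fin 2) (Fin 2) ℂ) (x : Fin 2 → ℂ) :
    (A * B - B * A).mulVec x = A.mulVec (B.mulVec x) - B.mulVec (A.mulVec x) := by
  simp only [sub_mulVec, mulVec_mulVec]

private lemma not_unit_of_common_eigenvector {A B : Matrix (Fin 2) (Fin 2) ℂ}
    {v : Fin 2 → ℂ} (hv : v ≠ 0) {a b : ℂ} (ha : A.mulVec v = a • v)
    (hb : B.mulVec v = b • v) : ¬ IsUnit (A * B - B * A) := by
  have hdet : (A * B - B * A).det = 0 := by
    rw [← Matrix.exists_mulVec_eq_zero_iff]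
    refine ⟨v, hv, ?_⟩
    rw [comm_mulVec, ha, hb, mulVec_smul, mulVec_smul, ha, hb, smul_comm, sub_self]
  rw [Matrix.isUnit_iff_isUnit_det, isUnit_iff_ne_zero]
  simp [hdet]

private lemma exists_common_eigenvector (A B : Matrix (Fin 2) (Fin 2) ℂ)
    (h : (A * B - B * A).det = 0) :
    ∃ v : Fin 2 → ℂ, v ≠ 0 ∧ (∃ a : ℂ, A.mulVec v = a • v) ∧ (∃ b : ℂ, B.mulVec v = b • v) := by
  obtain ⟨a, ha⟩ := Module.End.exists_eigenvalue (Matrix.mulVecLin A)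
  obtain ⟨v, hv⟩ := ha.exists_hasEigenvector
  have hv0 : v ≠ 0 := hv.2
  have hAv : A.mulVec v = a • v := by simpa using hv.apply_eq_smul
  by_cases hw : B.mulVec v ∈ Submodule.span ℂ ({v} : Set (Fin 2 → ℂ))
  · obtain ⟨b, hb⟩ := Submodule.mem_span_singleton.1 hw
    exact ⟨v, hv0, ⟨a, hAv⟩, ⟨b, hb.symm⟩⟩
  -- v and w := B.mulVec v are linearly independent
  have hindep : ∀ c d : ℂ, c • v + d • (B.mulVec v) = 0 → c = 0 ∧ d = 0 := by
    intro c d hcd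
    have hd : d = 0 := by
      by_contra hd
      apply hw
      rw [Submodule.mem_span_singleton]
      refine ⟨-(d⁻¹ * c), ?_⟩
      have h2 : d⁻¹ • (c • v + d • B.mulVec v) = d⁻¹ • (0 : Fin 2 → ℂ) := by rw [hcd]
      rw [smul_zero, smul_add, smul_smul, smul_smul, inv_mul_cancel₀ hd, one_smul] at h2
      rw [neg_smul]
      exact (eq_neg_of_add_eq_zero_right h2).symm
    refine ⟨?_, hd⟩
    rw [hd, zero_smul, add_zero] at hcd
    exact (smul_eq_zero.1 hcd).resolve_right hv0
  have hli : LinearIndependent ℂ ![v, B.mulVec v] := LinearIndependent.pair_iff.2 hindep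
  have hspan : Submodule.span ℂ ({v, B.mulVec v} : Set (Fin 2 → ℂ)) = ⊤ := by
    apply Submodule.eq_top_of_finrank_eq
    have h1 := finrank_span_eq_card hli
    have h2 : Set.range ![v, B.mulVec v] = {v, B.mulVec v} := by
      simp [Set.pair_comm]
    rw [h2] at h1
    simp [h1]
  have hcoords : ∀ x : Fin 2 → ℂ, ∃ p q : ℂ, p • v + q • B.mulVec v = x := by
    intro x
    have : x ∈ Submodule.span ℂ ({v, B.mulVec v} : Set (Fin 2 → ℂ)) := by
      rw [hspan]; trivial
    exact Submodule.mem_span_pair.1 this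
  obtain ⟨α, β, hAw⟩ := hcoords (A.mulVec (B.mulVec v))
  obtain ⟨γ, δ, hBw⟩ := hcoords (B.mulVec (B.mulVec v))
  have hCv : (A * B - B * A).mulVec v = α • v + (β - a) • B.mulVec v := by
    rw [comm_mulVec, hAv, mulVec_smul, ← hAw]
    module
  have hCw : (A * B - B * A).mulVec (B.mulVec v)
      = (a * γ + δ * α - β * γ) • v + (-α) • B.mulVec v := by
    rw [comm_mulVec, ← hBw, ← hAw, mulVec_add, mulVec_add, mulVec_smul, mulVec_smul,
      mulVec_smul, mulVec_smul, hAv, ← hAw, ← hBw]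
    module
  obtain ⟨z, hz0, hz⟩ := (Matrix.exists_mulVec_eq_zero_iff).2 h
  obtain ⟨p, q, hpq⟩ := hcoords z
  have hCz : (p * α + q * (a * γ + δ * α - β * γ)) • v
      + (p * (β - a) + q * (-α)) • B.mulVec v = 0 := by
    calc (p * α + q * (a * γ + δ * α - β * γ)) • v
          + (p * (β - a) + q * (-α)) • B.mulVec v
        = p • (α • v + (β - a) • B.mulVec v)
          + q • ((a * γ + δ * α - β * γ) • v + (-α) • B.mulVec v) := by module
      _ = p • ((A * B - B * A).mulVec v)
          + q • ((A * B - B * A).mulVec (B.mulVec v)) := by rw [hCv, hCw]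
      _ = (A * B - B * A).mulVec z := by
          rw [← hpq, mulVec_add, mulVec_smul, mulVec_smul]
      _ = 0 := hz
  obtain ⟨e1, e2⟩ := hindep _ _ hCz
  by_cases hs : α = 0 ∧ β = a
  · -- A acts as the scalar a on all of ℂ²; use an eigenvector of B
    obtain ⟨b, hb⟩ := Module.End.exists_eigenvalue (Matrix.mulVecLin B)
    obtain ⟨u, hu⟩ := hb.exists_hasEigenvector
    have hBu : B.mulVec u = b • u := by simpa using hu.apply_eq_smul
    obtain ⟨s, t, hst⟩ := hcoords u
    have hAu : A.mulVec u = a • u := by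
      rw [← hst, mulVec_add, mulVec_smul, mulVec_smul, hAv, ← hAw, hs.1, hs.2]
      module
    exact ⟨u, hu.2, ⟨a, hAu⟩, ⟨b, hBu⟩⟩
  · have hpq0 : ¬ (p = 0 ∧ q = 0) := by
      rintro ⟨h1, h2⟩
      apply hz0
      rw [← hpq, h1, h2]
      simp
    have hq : q ≠ 0 := by
      intro hq0
      have hp0 : p ≠ 0 := fun hp0 => hpq0 ⟨hp0, hq0⟩
      rw [hq0] at e1 e2
      simp [hp0, sub_eq_zero] at e1 e2
      exact hs ⟨e1, e2⟩
    have key : α ^ 2 = (β - a) * ((β - a) * γ - δ * α) := by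
      have h1 : q * α ^ 2 = q * ((β - a) * ((β - a) * γ - δ * α)) := by
        linear_combination (β - a) * e1 - α * e2
      exact mul_left_cancel₀ hq h1
    have hu0 : α • v + (β - a) • B.mulVec v ≠ 0 := by
      intro h0
      obtain ⟨h1, h2⟩ := hindep _ _ h0
      exact hs ⟨h1, sub_eq_zero.1 h2⟩
    have hAu : A.mulVec (α • v + (β - a) • B.mulVec v)
        = β • (α • v + (β - a) • B.mulVec v) := by
      rw [mulVec_add, mulVec_smul, mulVec_smul, hAv, ← hAw]
      module
    by_cases hα : α = 0
    · have hβa : β - a ≠ 0 := by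
        rw [sub_ne_zero]
        exact fun hβ => hs ⟨hα, hβ⟩
      have hγ : γ = 0 := by
        rw [hα] at key
        simp [sub_ne_zero, hβa] at key
        tauto
      refine ⟨_, hu0, ⟨β, hAu⟩, ⟨δ, ?_⟩⟩
      rw [mulVec_add, mulVec_smul, mulVec_smul, ← hBw, hα, hγ]
      module
    · refine ⟨_, hu0, ⟨β, hAu⟩, ⟨(β - a) * γ / α, ?_⟩⟩
      rw [mulVec_add, mulVec_smul, mulVec_smul, ← hBw]
      match_scalars <;> field_simp <;> linear_combination key

/-- A pair of 2×2 complex matrices is irreducible iff their commutator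
is invertible. -/
theorem irreducible_iff_commutator_invertible
    (A B : Matrix (Fin 2) (Fin 2) ℂ) :
    (¬ ∃ V : Submodule ℂ (Fin 2 → ℂ), V ≠ ⊥ ∧ V ≠ ⊤ ∧
      (∀ v ∈ V, A.mulVec v ∈ V) ∧ (∀ v ∈ V, B.mulVec v ∈ V)) ↔
      IsUnit (A * B - B * A) := by
  constructor
  · intro h
    by_contra hu
    have hdet : (A * B - B * A).det = 0 := by
      rwa [Matrix.isUnit_iff_isUnit_det, isUnit_iff_ne_zero, not_not] at hu
    obtain ⟨v, hv0, ⟨a, ha⟩, ⟨b, hb⟩⟩ := exists_common_eigenvector A B hdet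
    apply h
    refine ⟨Submodule.span ℂ {v}, ?_, ?_, ?_, ?_⟩
    · simpa using hv0
    · intro htop
      have h1 : finrank ℂ (Submodule.span ℂ ({v} : Set (Fin 2 → ℂ))) = 1 :=
        finrank_span_singleton hv0
      rw [htop] at h1
      simp [finrank_top] at h1
    · intro x hx
      obtain ⟨c, rfl⟩ := Submodule.mem_span_singleton.1 hx
      rw [mulVec_smul, ha]
      exact Submodule.smul_mem _ _ (Submodule.smul_mem _ _ (Submodule.mem_span_singleton_self v))
    · intro x hx
      obtain ⟨c, rfl⟩ := Submodule.mem_span_singleton.1 hx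
      rw [mulVec_smul, hb]
      exact Submodule.smul_mem _ _ (Submodule.smul_mem _ _ (Submodule.mem_span_singleton_self v))
  · intro hU
    rintro ⟨V, hVbot, hVtop, hA, hB⟩
    obtain ⟨v, hvV, hv0⟩ := Submodule.ne_bot_iff V |>.1 hVbot
    have hVle : V = Submodule.span ℂ {v} := by
      refine (Submodule.eq_of_le_of_finrank_le (Submodule.span_le.2 (by simpa using hvV)) ?_).symm
      rw [finrank_span_singleton hv0]
      have h2 := Submodule.finrank_lt (K := ℂ) (V := Fin 2 → ℂ) hVtop
      have h3 : finrank ℂ (Fin 2 → ℂ) = 2 := by simp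
      omega
    obtain ⟨a, ha⟩ := Submodule.mem_span_singleton.1 (hVle ▸ hA v hvV)
    obtain ⟨b, hb⟩ := Submodule.mem_span_singleton.1 (hVle ▸ hB v hvV)
    exact not_unit_of_common_eigenvector hv0 ha.symm hb.symm hU
end

section
/- Let M₁, M₂, M₃ ∈ SL(2, ℂ) with M₁M₂M₃ = I. Then det([M_j, M_k]) = 4T for any pair j ≠ k in {1, 2, 3}, where t_i = (1/2)tr(M_i) and T = 1 − t₁² − t₂² − t₃² + 2t₁t₂t₃. -/
/-!
Fricke's identity expresses `det [A, B]` for `A, B ∈ SL(2)` through `tr A`, `tr B` and `tr (A B)`.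
If `A B C = 1` then `A B = C⁻¹`, and inversion preserves traces in `SL(2)` (the inverse is the
adjugate), so `tr (A B) = tr C`. The products `M₁M₂M₃`, `M₂M₃M₁`, `M₃M₁M₂` are all `1`, which
covers the pairs `(1,2)`, `(2,3)`, `(3,1)`; the reversed pairs follow since
`det [B, A] = det (-[A, B]) = det [A, B]` in even dimension.
-/

open Matrix

variable {R : Type*} [CommRing R]

theorem Matrix.det_commutator_fin_two (A B : Matrix (Fin 2) (Fin 2) R) :
    (A * B - B * A).det =
      4 * A.det * B.det - B.det * A.trace ^ 2 - A.det * B.trace ^ 2 - (A * B).trace ^ 2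
        + A.trace * B.trace * (A * B).trace := by
  simp only [det_fin_two, trace_fin_two, mul_apply, sub_apply, Fin.sum_univ_two]
  ring

theorem Matrix.det_commutator_swap_fin_two (A B : Matrix (Fin 2) (Fin 2) R) :
    (B * A - A * B).det = (A * B - B * A).det := by
  rw [← neg_sub, det_neg, Fintype.card_fin, neg_one_sq, one_mul]

theorem Matrix.trace_eq_of_mul_eq_one_of_det_eq_one {A B : Matrix (Fin 2) (Fin 2) R}
    (hAB : A * B = 1) (hA : A.det = 1) : B.trace = A.trace := by
  have hB : B = A.adjugate := by
    simpa [← mul_assoc, adjugate_mul, hA] using congrArg (A.adjugate * ·) hAB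
  rw [hB, adjugate_fin_two, trace_fin_two, trace_fin_two]
  simp [add_comm]

theorem Matrix.det_commutator_of_mul_mul_eq_one {A B C : Matrix (Fin 2) (Fin 2) R}
    (hA : A.det = 1) (hB : B.det = 1) (hABC : A * B * C = 1) :
    (A * B - B * A).det =
      4 - A.trace ^ 2 - B.trace ^ 2 - C.trace ^ 2 + A.trace * B.trace * C.trace := by
  have hAB : (A * B).det = 1 := by rw [det_mul, hA, hB, one_mul]
  rw [det_commutator_fin_two, hA, hB, ← trace_eq_of_mul_eq_one_of_det_eq_one hABC hAB]
  ring

/-- For a triple in SL(2,ℂ) with product the identity,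
det [M_j, M_k] = 4T where T is the trace polynomial. -/
theorem det_commutator_eq_four_T
    (M : Fin 3 → Matrix (Fin 2) (Fin 2) ℂ) (hdet : ∀ k, (M k).det = 1)
    (hprod : M 0 * M 1 * M 2 = 1) :
    ∀ j k : Fin 3, j ≠ k →
      (M j * M k - M k * M j).det =
        4 * (1 - ((1:ℂ)/2 * (M 0).trace)^2 - ((1:ℂ)/2 * (M 1).trace)^2
          - ((1:ℂ)/2 * (M 2).trace)^2
          + 2 * ((1:ℂ)/2 * (M 0).trace) * ((1:ℂ)/2 * (M 1).trace)
            * ((1:ℂ)/2 * (M 2).trace)) := by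
  have hprod₁ : M 1 * M 2 * M 0 = 1 := by
    rw [mul_eq_one_comm, ← mul_assoc, hprod]
  have hprod₂ : M 2 * M 0 * M 1 = 1 := by
    rw [mul_eq_one_comm, ← mul_assoc, hprod₁]
  have h01 := det_commutator_of_mul_mul_eq_one (hdet 0) (hdet 1) hprod
  have h12 := det_commutator_of_mul_mul_eq_one (hdet 1) (hdet 2) hprod₁
  have h20 := det_commutator_of_mul_mul_eq_one (hdet 2) (hdet 0) hprod₂
  have h10 := (det_commutator_swap_fin_two (M 0) (M 1)).trans h01
  have h21 := (det_commutator_swap_fin_two (M 1) (M 2)).trans h12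
  have h02 := (det_commutator_swap_fin_two (M 2) (M 0)).trans h20
  intro j k hjk
  fin_cases j <;> fin_cases k <;> first
    | exact absurd rfl hjk
    | simp only [Fin.zero_eta, Fin.mk_one, Fin.reduceFinMk, h01, h10, h12, h21, h20, h02]
      ring
end

section
/- Let X : ℝ → M_{2×2}(ℂ) be an analytic (or n-times differentiable at p with vanishing lower derivatives) matrix-valued function with trace X(t) = 0 for all t. If X and its first n−1 derivatives vanish at a point p, then det(X^{(n)}(p)) = (1 / binom(2n, n)) · (det X)^{(2n)}(p). -/
open Matrix

private lemma iterDeriv_smooth {f : ℝ → ℂ} (hf : ContDiff ℝ ⊤ f) (k : ℕ) :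
    ContDiff ℝ (⊤ : ℕ∞) (iteratedDeriv k f) := by
  rw [iteratedDeriv_eq_iterate]; exact (hf.of_le le_top).iterate_deriv k

private lemma leibniz_iteratedDeriv {f g : ℝ → ℂ} (hf : ContDiff ℝ ⊤ f)
    (hg : ContDiff ℝ ⊤ g) (m : ℕ) (t : ℝ) :
    iteratedDeriv m (fun x => f x * g x) t =
      ∑ k ∈ Finset.range (m + 1),
        (m.choose k : ℂ) * (iteratedDeriv k f t * iteratedDeriv (m - k) g t) := by
  induction m generalizing t with
  | zero => simp
  | succ m ih =>
    rw [iteratedDeriv_succ]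
    have h1 : deriv (iteratedDeriv m fun x => f x * g x) t =
        deriv (fun t => ∑ k ∈ Finset.range (m + 1),
          (m.choose k : ℂ) * (iteratedDeriv k f t * iteratedDeriv (m - k) g t)) t := by
      congr 1; ext s; exact ih s
    rw [h1, deriv_fun_sum]
    · have hterm : ∀ k ∈ Finset.range (m + 1),
          deriv (fun t => (m.choose k : ℂ) *
            (iteratedDeriv k f t * iteratedDeriv (m - k) g t)) t =
          (m.choose k : ℂ) * (iteratedDeriv (k + 1) f t * iteratedDeriv (m - k) g t
            + iteratedDeriv k f t * iteratedDeriv (m - k + 1) g t) := by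
        intro k _
        rw [deriv_const_mul (d := fun y => iteratedDeriv k f y * iteratedDeriv (m - k) g y) _ (((iterDeriv_smooth hf k).differentiable (by simp) t).mul
          ((iterDeriv_smooth hg (m - k)).differentiable (by simp) t)),
          deriv_fun_mul ((iterDeriv_smooth hf k).differentiable (by simp) t)
            ((iterDeriv_smooth hg (m - k)).differentiable (by simp) t),
          ← iteratedDeriv_succ, ← iteratedDeriv_succ]
      rw [Finset.sum_congr rfl hterm]
      have key := Finset.sum_choose_succ_mul
        (fun i j => iteratedDeriv i f t * iteratedDeriv j g t) m (R := ℂ)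
      rw [show m + 1 + 1 = m + 2 from rfl, key]
      rw [← Finset.sum_add_distrib]
      apply Finset.sum_congr rfl
      intro k hk
      rw [Finset.mem_range] at hk
      have : m + 1 - k = m - k + 1 := by omega
      rw [this]; ring
    · intro k _
      exact ((((iterDeriv_smooth hf k).mul (iterDeriv_smooth hg (m - k))).differentiable
        (by simp) t).const_mul _)

private lemma key_lemma {f g : ℝ → ℂ} (hf : ContDiff ℝ ⊤ f) (hg : ContDiff ℝ ⊤ g)
    (n : ℕ) (p : ℝ) (hfv : ∀ k < n, iteratedDeriv k f p = 0)
    (hgv : ∀ k < n, iteratedDeriv k g p = 0) :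
    iteratedDeriv (2 * n) (fun x => f x * g x) p =
      ((2 * n).choose n : ℂ) * (iteratedDeriv n f p * iteratedDeriv n g p) := by
  rw [leibniz_iteratedDeriv hf hg]
  rw [Finset.sum_eq_single n]
  · congr 1; congr 2; omega
  · intro k hk hkn
    rw [Finset.mem_range] at hk
    rcases lt_or_gt_of_ne hkn with h | h
    · rw [hfv k h]; ring
    · rw [hgv (2 * n - k) (by omega)]; ring
  · intro h; exact absurd (Finset.mem_range.mpr (by omega)) h

/-- For a smooth traceless 2×2 matrix-valued function whose entries vanish
to order n at p, det of the n-th derivative matrix at p equals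
(1/binom(2n,n)) times the 2n-th derivative of det X at p. -/
theorem det_nth_derivative_traceless
    (X : ℝ → Matrix (Fin 2) (Fin 2) ℂ) (p : ℝ) (n : ℕ)
    (hsmooth : ∀ i j : Fin 2, ContDiff ℝ ⊤ (fun t => X t i j))
    (htr : ∀ t : ℝ, (X t).trace = 0)
    (hvanish : ∀ k < n, ∀ i j : Fin 2, iteratedDeriv k (fun t => X t i j) p = 0) :
    (Matrix.of fun i j => iteratedDeriv n (fun t => X t i j) p).det =
      (1 / (Nat.choose (2 * n) n : ℂ)) *
        iteratedDeriv (2 * n) (fun t => (X t).det) p := by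
  have hdet : (fun t => (X t).det) =
      (fun t => X t 0 0 * X t 1 1) - (fun t => X t 0 1 * X t 1 0) := by
    ext t; simp [Matrix.det_fin_two]
  have hsub : iteratedDeriv (2 * n) (fun t => (X t).det) p =
      iteratedDeriv (2 * n) (fun t => X t 0 0 * X t 1 1) p -
      iteratedDeriv (2 * n) (fun t => X t 0 1 * X t 1 0) p := by
    rw [hdet]
    have hdet2 : ((fun t => X t 0 0 * X t 1 1) - fun t => X t 0 1 * X t 1 0) =
        (fun t => X t 0 0 * X t 1 1) + -(fun t => X t 0 1 * X t 1 0) := by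
      ext t; simp [sub_eq_add_neg]
    rw [hdet2, iteratedDeriv_eq_iteratedFDeriv, iteratedDeriv_eq_iteratedFDeriv,
      iteratedDeriv_eq_iteratedFDeriv]
    have hadd := iteratedFDeriv_add_apply (𝕜 := ℝ) (i := 2 * n) (x := p)
      (f := fun t => X t 0 0 * X t 1 1) (g := -(fun t => X t 0 1 * X t 1 0))
      (((hsmooth 0 0).mul (hsmooth 1 1)).of_le le_top).contDiffAt
      ((((hsmooth 0 1).mul (hsmooth 1 0)).of_le le_top).neg).contDiffAt
    have hneg := iteratedFDeriv_neg_apply (𝕜 := ℝ) (i := 2 * n) (x := p)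
      (f := fun t => X t 0 1 * X t 1 0)
    rw [hadd, hneg]
    simp [sub_eq_add_neg]
  rw [hsub,
    key_lemma (hsmooth 0 0) (hsmooth 1 1) n p (fun k hk => hvanish k hk 0 0)
      (fun k hk => hvanish k hk 1 1),
    key_lemma (hsmooth 0 1) (hsmooth 1 0) n p (fun k hk => hvanish k hk 0 1)
      (fun k hk => hvanish k hk 1 0)]
  have hc : ((2 * n).choose n : ℂ) ≠ 0 := by
    exact Nat.cast_ne_zero.mpr (Nat.choose_pos (by omega)).ne'
  rw [Matrix.det_fin_two]
  simp only [Matrix.of_apply]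
  field_simp
end

section
/- Let M₁, M₂, M₃ ∈ SL(2, ℂ) satisfy M₁M₂M₃ = I, let t_k = (1/2)tr(M_k) and assume each t_k ∈ [−1, 1]. Set T = 1 − t₁² − t₂² − t₃² + 2t₁t₂t₃. If T > 0, then there exists C ∈ SL(2, ℂ) such that C M₁ C⁻¹, C M₂ C⁻¹, C M₃ C⁻¹ are all in SU(2), and the triple {M₁, M₂, M₃} is irreducible. -/
open Matrix

lemma sq_lt_one_left (a b c : ℝ) (hb : |b| ≤ 1)
    (hT : 0 < 1 - a^2 - b^2 - c^2 + 2*a*b*c) : a^2 < 1 := by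
  by_contra h
  push_neg at h
  have hb2 : b^2 ≤ 1 := (sq_le_one_iff_abs_le_one _).mpr hb
  nlinarith [sq_nonneg (c - a*b), mul_nonneg (by linarith : (0:ℝ) ≤ a^2 - 1) (by linarith : (0:ℝ) ≤ 1 - b^2)]


lemma eig_structure (t : ℝ) (α : ℂ) (ht : t^2 < 1) (h : α^2 - 2*(t:ℂ)*α + 1 = 0) :
    α.re = t ∧ α.im^2 = 1 - t^2 := by
  have h1 : (α - t)^2 = (t:ℂ)^2 - 1 := by ring_nf; linear_combination h
  have e1 : (α.re - t)^2 - α.im^2 = t^2 - 1 := by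
    have := congrArg Complex.re h1
    simpa [pow_two, Complex.mul_re] using this
  have e2 : (α.re - t) * α.im + α.im * (α.re - t) = 0 := by
    have := congrArg Complex.im h1
    simpa [pow_two, Complex.mul_im] using this
  have him : α.im ≠ 0 := by
    intro h0
    rw [h0] at e1
    nlinarith [sq_nonneg (α.re - t)]
  have hre0 : α.re = t := by
    have : (α.re - t) * α.im = 0 := by linarith
    rcases mul_eq_zero.mp this with h' | h'
    · linarith
    · exact absurd h' him
  refine ⟨hre0, by rw [hre0] at e1; linarith⟩

lemma triple_contradiction (t0 t1 t2 s0 s1 s2 : ℝ)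
    (h0 : s0^2 = 1 - t0^2) (h1 : s1^2 = 1 - t1^2) (h2 : s2^2 = 1 - t2^2)
    (hp : ((t0:ℂ) + s0*Complex.I) * ((t1:ℂ) + s1*Complex.I) * ((t2:ℂ) + s2*Complex.I) = 1)
    (hT : 0 < 1 - t0^2 - t1^2 - t2^2 + 2 * t0 * t1 * t2) : False := by
  have hc : ((t0:ℂ) + s0*Complex.I) * ((t1:ℂ) + s1*Complex.I) = (t2:ℂ) - s2*Complex.I := by
    have hne : ((t2:ℂ) + s2*Complex.I) ≠ 0 := by
      intro h
      have him := congrArg Complex.im h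
      have hre' := congrArg Complex.re h
      simp at him hre'
      rw [him, hre'] at h2
      nlinarith
    have key : (((t0:ℂ) + s0*Complex.I) * ((t1:ℂ) + s1*Complex.I)) * ((t2:ℂ) + s2*Complex.I)
        = ((t2:ℂ) - s2*Complex.I) * ((t2:ℂ) + s2*Complex.I) := by
      rw [hp]
      have hs : ((t2:ℂ))^2 + (s2:ℂ)^2 = 1 := by
        have : ((t2:ℝ)^2 + s2^2 : ℝ) = 1 := by nlinarith
        exact_mod_cast this
      linear_combination -hs + (s2:ℂ)^2 * Complex.I_sq
    exact mul_right_cancel₀ hne key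
  have hre : t0 * t1 - s0 * s1 = t2 := by
    have := congrArg Complex.re hc
    simpa [Complex.mul_re, Complex.mul_im] using this
  have hzero : 1 - t0^2 - t1^2 - t2^2 + 2 * t0 * t1 * t2 = 0 := by
    linear_combination (t1^2 - 1) * h0 - s0^2 * h1 + (t2 - t0*t1 - s0*s1) * hre
  linarith

lemma trace_eq_of_mul_eq_one (A B : Matrix (Fin 2) (Fin 2) ℂ)
    (h : A * B = 1) (hA : A.det = 1) : B.trace = A.trace := by
  have h2 : A.adjugate * A = 1 := by rw [Matrix.adjugate_mul, hA, one_smul]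
  have hB : B = A.adjugate := by
    calc B = 1 * B := (one_mul B).symm
    _ = A.adjugate * A * B := by rw [h2]
    _ = A.adjugate * (A * B) := by rw [Matrix.mul_assoc]
    _ = A.adjugate := by rw [h, mul_one]
  rw [hB, Matrix.adjugate_fin_two, Matrix.trace_fin_two]
  simp [Matrix.trace_fin_two]
  ring

lemma conj_of_eq {A Q U : Matrix (Fin 2) (Fin 2) ℂ} (hQ : IsUnit Q.det)
    (h : A * Q = Q * U) : Q⁻¹ * A * Q = U := by
  calc Q⁻¹ * A * Q = Q⁻¹ * (A * Q) := by rw [Matrix.mul_assoc]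
  _ = Q⁻¹ * (Q * U) := by rw [h]
  _ = (Q⁻¹ * Q) * U := by rw [Matrix.mul_assoc]
  _ = U := by rw [Matrix.nonsing_inv_mul _ hQ, one_mul]

lemma exists_diag (A : Matrix (Fin 2) (Fin 2) ℂ) (t0 s0 : ℝ)
    (hdet : A.det = 1) (htr : A.trace = 2*(t0:ℂ)) (hs : s0^2 = 1 - t0^2) (hs0 : s0 ≠ 0) :
    ∃ Q : Matrix (Fin 2) (Fin 2) ℂ, IsUnit Q.det ∧
      A * Q = Q * !![(t0:ℂ) + s0*Complex.I, 0; 0, (t0:ℂ) - s0*Complex.I] := by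
  set l : ℂ := (t0:ℂ) + s0*Complex.I with hl
  set l' : ℂ := (t0:ℂ) - s0*Complex.I with hl'
  set p := A 0 0 with hp; set q := A 0 1 with hq0; set u := A 1 0 with hu0; set v := A 1 1 with hv0
  have hpv : p * v - q * u = 1 := by rw [Matrix.det_fin_two] at hdet; linear_combination hdet
  have hsum : p + v = 2*(t0:ℂ) := by rw [Matrix.trace_fin_two] at htr; linear_combination htr
  have hsC : (s0:ℂ)^2 = 1 - (t0:ℂ)^2 := by exact_mod_cast hs
  have hIl : ((s0:ℂ)*Complex.I)^2 = -(s0:ℂ)^2 := by rw [mul_pow, Complex.I_sq]; ring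
  have hchl : l^2 = (p+v)*l - 1 := by
    rw [hsum, hl]; linear_combination hIl - hsC
  have hchl' : l'^2 = (p+v)*l' - 1 := by
    rw [hsum, hl']; linear_combination hIl - hsC
  have hllne : l - l' ≠ 0 := by
    rw [hl, hl']
    simp [Complex.ext_iff]
    exact_mod_cast hs0
  have hA : A = !![p, q; u, v] := by
    ext i j; fin_cases i <;> fin_cases j <;> rfl
  by_cases hq : q ≠ 0
  · refine ⟨!![q, q; l - p, l' - p], ?_, ?_⟩
    · rw [Matrix.det_fin_two_of, isUnit_iff_ne_zero]
      intro h
      apply hllne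
      have h2 : q * (l' - l) = 0 := by linear_combination h
      rcases mul_eq_zero.mp h2 with h' | h'
      · exact absurd h' hq
      · linear_combination -h'
    · rw [hA]
      ext i j
      fin_cases i <;> fin_cases j <;>
        simp [Matrix.mul_apply, Fin.sum_univ_two]
      · ring
      · ring
      · linear_combination -hchl - hpv
      · linear_combination -hchl' - hpv
  · push_neg at hq
    by_cases hu : u ≠ 0
    · refine ⟨!![l - v, l' - v; u, u], ?_, ?_⟩
      · rw [Matrix.det_fin_two_of, isUnit_iff_ne_zero]
        intro h
        apply hllne
        have h2 : u * (l - l') = 0 := by linear_combination h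
        rcases mul_eq_zero.mp h2 with h' | h'
        · exact absurd h' hu
        · linear_combination h'
      · rw [hA]
        ext i j
        fin_cases i <;> fin_cases j <;>
          simp [Matrix.mul_apply, Fin.sum_univ_two]
        · linear_combination -hchl - hpv
        · linear_combination -hchl' - hpv
        · ring
        · ring
    · push_neg at hu
      have hlm : l * l' = 1 := by
        rw [hl, hl']
        linear_combination hsC - hIl
      have hproots : (p - l) * (p - l') = 0 := by
        have hABpv : p * v = 1 := by rw [hq, hu] at hpv; linear_combination hpv
        have hsum2 : l + l' = p + v := by rw [hl, hl', hsum]; ring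
        linear_combination hlm - hABpv - p * hsum2
      rcases mul_eq_zero.mp hproots with h' | h'
      · have hpeq : p = l := by linear_combination h'
        have hveq : v = l' := by
          have : l + l' = p + v := by rw [hl, hl', hsum]; ring
          linear_combination -this - hpeq
        refine ⟨1, by simp, ?_⟩
        rw [hA, hq, hu, hpeq, hveq, Matrix.mul_one, Matrix.one_mul]
      · have hpeq : p = l' := by linear_combination h'
        have hveq : v = l := by
          have : l + l' = p + v := by rw [hl, hl', hsum]; ring
          linear_combination -this - hpeq
        refine ⟨!![0, 1; 1, 0], ?_, ?_⟩
        · rw [Matrix.det_fin_two_of]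
          norm_num
        · rw [hA, hq, hu, hpeq, hveq]
          ext i j
          fin_cases i <;> fin_cases j <;>
            simp [Matrix.mul_apply, Fin.sum_univ_two]

set_option maxHeartbeats 1000000 in
/-- Goldman's criterion (sufficiency): if T > 0 then the triple is
simultaneously unitarizable into SU(2) and irreducible. -/
theorem goldman_unitarizability
    (M : Fin 3 → Matrix (Fin 2) (Fin 2) ℂ) (hdet : ∀ k, (M k).det = 1)
    (hprod : M 0 * M 1 * M 2 = 1)
    (t : Fin 3 → ℝ) (ht : ∀ k, (M k).trace = 2 * (t k : ℂ))
    (hbound : ∀ k, |t k| ≤ 1)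
    (hT : 0 < 1 - (t 0)^2 - (t 1)^2 - (t 2)^2 + 2 * t 0 * t 1 * t 2) :
    (∃ C : Matrix (Fin 2) (Fin 2) ℂ, C.det = 1 ∧
      ∀ k, (C * M k * C⁻¹) ∈ Matrix.specialUnitaryGroup (Fin 2) ℂ) ∧
    (¬ ∃ V : Submodule ℂ (Fin 2 → ℂ), V ≠ ⊥ ∧ V ≠ ⊤ ∧
      ∀ k, ∀ v ∈ V, (M k).mulVec v ∈ V) := by
  have ht0 : (t 0)^2 < 1 := sq_lt_one_left _ _ _ (hbound 1) hT
  constructor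
  · -- unitarizability
    set s0 : ℝ := Real.sqrt (1 - (t 0)^2) with hs0def
    have hs0sq : s0^2 = 1 - (t 0)^2 := Real.sq_sqrt (by linarith)
    have hs0pos : 0 < s0 := Real.sqrt_pos.mpr (by linarith)
    obtain ⟨Q, hQ, hQM⟩ := exists_diag (M 0) (t 0) s0 (hdet 0) (ht 0) hs0sq (ne_of_gt hs0pos)
    set U0 : Matrix (Fin 2) (Fin 2) ℂ :=
      !![(t 0 : ℂ) + s0*Complex.I, 0; 0, (t 0 : ℂ) - s0*Complex.I] with hU0def
    set N : Matrix (Fin 2) (Fin 2) ℂ := Q⁻¹ * M 1 * Q with hNdef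
    have hQN : M 1 * Q = Q * N := by
      rw [hNdef, ← Matrix.mul_assoc, ← Matrix.mul_assoc, Matrix.mul_nonsing_inv _ hQ, one_mul]
    have hNdet : N.det = 1 := by
      rw [hNdef, Matrix.det_mul, Matrix.det_mul, Matrix.det_nonsing_inv, hdet 1]
      field_simp [hQ.ne_zero]
      exact Ring.inverse_mul_cancel _ hQ
    have hNtr : N.trace = 2 * (t 1 : ℂ) := by
      rw [hNdef, Matrix.trace_mul_comm (Q⁻¹ * M 1) Q, ← Matrix.mul_assoc,
        Matrix.mul_nonsing_inv _ hQ, one_mul, ht 1]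
    have hU0conj : Q⁻¹ * M 0 * Q = U0 := conj_of_eq hQ hQM
    have hU0Ntr : (U0 * N).trace = 2 * (t 2 : ℂ) := by
      have h1 : U0 * N = Q⁻¹ * (M 0 * M 1) * Q := by
        rw [← hU0conj, hNdef]
        simp only [Matrix.mul_assoc]
        rw [← Matrix.mul_assoc Q Q⁻¹ (M 1 * Q), Matrix.mul_nonsing_inv _ hQ, one_mul]
      have h2 : (M 0 * M 1).trace = 2 * (t 2 : ℂ) := by
        rw [← trace_eq_of_mul_eq_one (M 0 * M 1) (M 2) hprod
          (by rw [Matrix.det_mul, hdet 0, hdet 1, one_mul]), ht 2]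
      rw [h1, Matrix.trace_mul_comm (Q⁻¹ * (M 0 * M 1)) Q, ← Matrix.mul_assoc,
        Matrix.mul_nonsing_inv _ hQ, one_mul, h2]
    -- entries of N
    set a := N 0 0 with hadef; set b := N 0 1 with hbdef
    set c := N 1 0 with hcdef; set d := N 1 1 with hddef
    have e1 : a + d = 2 * (t 1 : ℂ) := by
      rw [Matrix.trace_fin_two] at hNtr; exact hNtr
    have e2 : ((t 0 : ℂ) + s0*Complex.I) * a + ((t 0 : ℂ) - s0*Complex.I) * d = 2 * (t 2 : ℂ) := by
      rw [Matrix.trace_fin_two] at hU0Ntr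
      rw [← hU0Ntr, hU0def]
      simp [Matrix.mul_apply, Fin.sum_univ_two]
      rfl
    set x : ℝ := (t 2 - t 0 * t 1) / s0 with hxdef
    have hxs : (s0:ℂ) * (x:ℂ) = (t 2 : ℂ) - (t 0 : ℂ) * (t 1 : ℂ) := by
      have : s0 * x = t 2 - t 0 * t 1 := by
        rw [hxdef]; field_simp
      exact_mod_cast this
    have hs0C : (s0:ℂ) ≠ 0 := by
      exact_mod_cast ne_of_gt hs0pos
    have key : (s0:ℂ) * (Complex.I * (a - d)) = (s0:ℂ) * (2*(x:ℂ)) := by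
      linear_combination e2 - (t 0 : ℂ)*e1 - 2*hxs
    have key2 : Complex.I * (a - d) = 2*(x:ℂ) := mul_left_cancel₀ hs0C key
    have ha : a = (t 1 : ℂ) - (x:ℂ)*Complex.I := by
      linear_combination (1/2)*e1 - (Complex.I/2)*key2 + ((a-d)/2)*Complex.I_sq
    have hd : d = (t 1 : ℂ) + (x:ℂ)*Complex.I := by
      linear_combination e1 - ha
    -- r
    have hrkey : s0^2*(1 - (t 1)^2 - x^2) = 1 - (t 0)^2 - (t 1)^2 - (t 2)^2 + 2 * t 0 * t 1 * t 2 := by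
      have hxsR : s0 * x = t 2 - t 0 * t 1 := by rw [hxdef]; field_simp
      linear_combination (1-(t 1)^2)*hs0sq - (s0*x + t 2 - t 0 * t 1)*hxsR
    have hrpos : 0 < 1 - (t 1)^2 - x^2 := by nlinarith
    set r : ℝ := Real.sqrt (1 - (t 1)^2 - x^2) with hrdef
    have hrsq : r^2 = 1 - (t 1)^2 - x^2 := Real.sq_sqrt (le_of_lt hrpos)
    have hrposR : 0 < r := Real.sqrt_pos.mpr hrpos
    have hrC : (r:ℂ) ≠ 0 := by exact_mod_cast ne_of_gt hrposR
    have hbc : b * c = -(r:ℂ)^2 := by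
      have hdN : a * d - b * c = 1 := by
        rw [Matrix.det_fin_two] at hNdet; linear_combination hNdet
      have hrsqC : (r:ℂ)^2 = 1 - ((t 1 : ℂ))^2 - ((x:ℂ))^2 := by exact_mod_cast hrsq
      have had : a * d = (t 1:ℂ)^2 + (x:ℂ)^2 := by
        rw [ha, hd]; linear_combination -(x:ℂ)^2 * Complex.I_sq
      linear_combination had - hdN + hrsqC
    have hbne : b ≠ 0 := by
      intro h
      rw [h, zero_mul] at hbc
      exact hrC (by
        have : (r:ℂ)^2 = 0 := by linear_combination hbc
        exact pow_eq_zero_iff (by norm_num) |>.mp this)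
    -- scaling matrix E
    obtain ⟨eps, heps⟩ := IsAlgClosed.exists_pow_nat_eq (k := ℂ) (b / (r:ℂ)) (n := 2) (by norm_num)
    have hepsne : eps ≠ 0 := by
      intro h
      rw [h] at heps
      have : b / (r:ℂ) = 0 := by rw [← heps]; ring
      exact hbne (by field_simp at this; simpa using this)
    have hb' : b = eps^2 * (r:ℂ) := by
      field_simp at heps
      linear_combination -heps
    set E : Matrix (Fin 2) (Fin 2) ℂ := !![eps, 0; 0, eps⁻¹] with hEdef
    have hEdet : E.det = 1 := by
      rw [hEdef, Matrix.det_fin_two_of]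
      field_simp
      norm_num
    set U1 : Matrix (Fin 2) (Fin 2) ℂ := !![a, (r:ℂ); -(r:ℂ), d] with hU1def
    have hNE : N * E = E * U1 := by
      have hc' : c * eps^2 = -(r:ℂ) := by
        have h1 : c * eps^2 * (r:ℂ) = -(r:ℂ) * (r:ℂ) := by
          calc c * eps^2 * (r:ℂ) = c * (eps^2 * (r:ℂ)) := by ring
          _ = c * b := by rw [← hb']
          _ = -(r:ℂ) * (r:ℂ) := by rw [mul_comm c b, hbc]; ring
        exact mul_right_cancel₀ hrC h1
      have hN : N = !![a, b; c, d] := by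
        ext i j; fin_cases i <;> fin_cases j <;> rfl
      rw [hN, hEdef, hU1def]
      ext i j
      fin_cases i <;> fin_cases j <;> simp [Matrix.mul_apply, Fin.sum_univ_two]
      · ring
      · field_simp
        linear_combination hb'
      · field_simp
        linear_combination hc'
      · ring
    -- R and C
    set R : Matrix (Fin 2) (Fin 2) ℂ := Q * E with hRdef
    have hEunit : IsUnit E.det := by rw [hEdet]; exact isUnit_one
    have hRdet : IsUnit R.det := by rw [hRdef, Matrix.det_mul]; exact hQ.mul hEunit
    have hU0E : U0 * E = E * U0 := by
      rw [hU0def, hEdef]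
      ext i j
      fin_cases i <;> fin_cases j <;> simp [Matrix.mul_apply, Fin.sum_univ_two] <;> ring
    have hM0R : M 0 * R = R * U0 := by
      rw [hRdef, ← Matrix.mul_assoc, hQM, Matrix.mul_assoc, hU0E, ← Matrix.mul_assoc,
        Matrix.mul_assoc]
    have hM1R : M 1 * R = R * U1 := by
      rw [hRdef, ← Matrix.mul_assoc, hQN, Matrix.mul_assoc, hNE, ← Matrix.mul_assoc,
        Matrix.mul_assoc]
    clear_value a b c d N U1
    obtain ⟨g, hg⟩ := IsAlgClosed.exists_pow_nat_eq (k := ℂ) R.det (n := 2) (by norm_num)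
    have hgne : g ≠ 0 := by
      intro h
      rw [h] at hg
      apply hRdet.ne_zero
      rw [← hg]; ring
    set C : Matrix (Fin 2) (Fin 2) ℂ := g • R⁻¹ with hCdef
    have hCdet : C.det = 1 := by
      rw [hCdef, Matrix.det_smul, Matrix.det_nonsing_inv, Ring.inverse_eq_inv', Fintype.card_fin, hg]
      exact mul_inv_cancel₀ hRdet.ne_zero
    have hCinv : C⁻¹ = g⁻¹ • R := by
      apply Matrix.inv_eq_right_inv
      rw [hCdef, Matrix.smul_mul, Matrix.mul_smul, smul_smul, Matrix.nonsing_inv_mul _ hRdet,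
        mul_inv_cancel₀ hgne, one_smul]
    have hconj : ∀ A : Matrix (Fin 2) (Fin 2) ℂ, C * A * C⁻¹ = R⁻¹ * A * R := by
      intro A
      rw [hCinv, hCdef, Matrix.smul_mul, Matrix.mul_smul, Matrix.smul_mul, smul_smul,
        inv_mul_cancel₀ hgne, one_smul]
    clear_value R C
    have hCU0 : C * M 0 * C⁻¹ = U0 := by rw [hconj]; exact conj_of_eq hRdet hM0R
    have hCU1 : C * M 1 * C⁻¹ = U1 := by rw [hconj]; exact conj_of_eq hRdet hM1R
    -- memberships
    have hllC : ((t 0 : ℂ) + s0*Complex.I) * ((t 0 : ℂ) - s0*Complex.I) = 1 := by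
      have hsC : (s0:ℂ)^2 = 1 - ((t 0 : ℝ):ℂ)^2 := by exact_mod_cast hs0sq
      linear_combination hsC - (s0:ℂ)^2 * Complex.I_sq
    have hU0mem : U0 ∈ Matrix.specialUnitaryGroup (Fin 2) ℂ := by
      rw [Matrix.mem_specialUnitaryGroup_iff]
      constructor
      · rw [Matrix.mem_unitaryGroup_iff, hU0def]
        ext i j
        fin_cases i <;> fin_cases j <;>
          simp [Matrix.mul_apply, Fin.sum_univ_two, Matrix.star_apply, Complex.ext_iff] <;>
          exact ⟨by nlinarith [hs0sq], by ring⟩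
      · rw [hU0def, Matrix.det_fin_two_of]
        linear_combination hllC
    have hadsum : a * d = 1 - (r:ℂ)^2 := by
      have hrsqC : (r:ℂ)^2 = 1 - ((t 1 : ℝ):ℂ)^2 - ((x:ℝ):ℂ)^2 := by exact_mod_cast hrsq
      rw [ha, hd]
      linear_combination -(x:ℂ)^2*Complex.I_sq + hrsqC
    have hconja : (starRingEnd ℂ) a = d := by
      rw [ha, hd]
      simp [Complex.ext_iff]
    have hconjd : (starRingEnd ℂ) d = a := by
      rw [ha, hd]
      simp [Complex.ext_iff]
    have hU1mem : U1 ∈ Matrix.specialUnitaryGroup (Fin 2) ℂ := by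
      rw [Matrix.mem_specialUnitaryGroup_iff]
      constructor
      · rw [Matrix.mem_unitaryGroup_iff, hU1def]
        ext i j
        fin_cases i <;> fin_cases j <;>
          simp [Matrix.mul_apply, Fin.sum_univ_two, Matrix.star_apply]
        · rw [hconja]; linear_combination hadsum
        · rw [hconjd]; ring
        · rw [hconja]; ring
        · rw [hconjd]; linear_combination hadsum
      · rw [hU1def, Matrix.det_fin_two_of]
        linear_combination hadsum
    -- M 2
    have hCunit : IsUnit C.det := by rw [hCdet]; exact isUnit_one
    have hprod2 : U0 * U1 * (C * M 2 * C⁻¹) = 1 := by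
      rw [← hCU0, ← hCU1]
      calc C * M 0 * C⁻¹ * (C * M 1 * C⁻¹) * (C * M 2 * C⁻¹)
          = C * (M 0 * (C⁻¹ * C) * M 1 * (C⁻¹ * C) * M 2) * C⁻¹ := by
            simp only [Matrix.mul_assoc]
      _ = C * (M 0 * M 1 * M 2) * C⁻¹ := by
            rw [Matrix.nonsing_inv_mul _ hCunit, Matrix.mul_one, Matrix.mul_one]
      _ = 1 := by rw [hprod, Matrix.mul_one, Matrix.mul_nonsing_inv _ hCunit]
    have hU01mem : U0 * U1 ∈ Matrix.specialUnitaryGroup (Fin 2) ℂ := mul_mem hU0mem hU1mem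
    have hU2eq : C * M 2 * C⁻¹ = star (U0 * U1) := by
      have h1 : star (U0 * U1) * (U0 * U1) = 1 :=
        (Matrix.mem_unitaryGroup_iff'.mp ((Matrix.mem_specialUnitaryGroup_iff.mp hU01mem).1))
      calc C * M 2 * C⁻¹ = 1 * (C * M 2 * C⁻¹) := (one_mul _).symm
      _ = star (U0 * U1) * ((U0 * U1) * (C * M 2 * C⁻¹)) := by rw [← h1, Matrix.mul_assoc]
      _ = star (U0 * U1) := by rw [hprod2, Matrix.mul_one]
    have hU2mem : C * M 2 * C⁻¹ ∈ Matrix.specialUnitaryGroup (Fin 2) ℂ := by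
      rw [hU2eq, Matrix.mem_specialUnitaryGroup_iff]
      constructor
      · exact Unitary.star_mem (Matrix.mem_specialUnitaryGroup_iff.mp hU01mem).1
      · rw [Matrix.star_eq_conjTranspose, Matrix.det_conjTranspose,
          (Matrix.mem_specialUnitaryGroup_iff.mp hU01mem).2]
        simp
    refine ⟨C, hCdet, ?_⟩
    intro k
    fin_cases k
    · show C * M 0 * C⁻¹ ∈ _
      rw [hCU0]; exact hU0mem
    · show C * M 1 * C⁻¹ ∈ _
      rw [hCU1]; exact hU1mem
    · show C * M 2 * C⁻¹ ∈ _
      exact hU2mem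
  · -- irreducibility
    rintro ⟨V, hVbot, hVtop, hinv⟩
    -- spanning vector
    have hrank : Module.finrank ℂ V = 1 := by
      have hle : Module.finrank ℂ V < 2 := by
        have := Submodule.finrank_lt (K := ℂ) (V := Fin 2 → ℂ) hVtop
        simpa using this
      have hpos : 0 < Module.finrank ℂ V := by
        have : Nontrivial V := Submodule.nontrivial_iff_ne_bot.mpr hVbot
        exact Module.finrank_pos
      omega
    obtain ⟨w, hw0, hwspan⟩ := finrank_eq_one_iff'.mp hrank
    set v : Fin 2 → ℂ := (w : Fin 2 → ℂ) with hv
    have hvV : v ∈ V := w.2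
    have hv0 : v ≠ 0 := fun h => hw0 (Subtype.ext h)
    have hev : ∀ k, ∃ c : ℂ, (M k).mulVec v = c • v := by
      intro k
      obtain ⟨c, hc⟩ := hwspan ⟨(M k).mulVec v, hinv k v hvV⟩
      exact ⟨c, (congrArg Subtype.val hc).symm⟩
    choose α hα using hev
    -- char poly
    have hchar : ∀ k, (α k)^2 - 2*(t k : ℂ)*(α k) + 1 = 0 := by
      intro k
      have h0 : (M k - α k • 1).mulVec v = 0 := by
        rw [Matrix.sub_mulVec, Matrix.smul_mulVec, Matrix.one_mulVec, hα k, sub_self]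
      have hd : (M k - α k • 1).det = 0 := by
        rw [← Matrix.exists_mulVec_eq_zero_iff]
        exact ⟨v, hv0, h0⟩
      have hdk := hdet k
      have htk := ht k
      rw [Matrix.det_fin_two] at hdk
      rw [Matrix.trace_fin_two] at htk
      rw [Matrix.det_fin_two] at hd
      simp only [Matrix.sub_apply, Matrix.smul_apply, Matrix.one_apply, smul_eq_mul] at hd
      norm_num at hd
      linear_combination hd - hdk + α k * htk
    -- product of eigenvalues
    have hprodα : α 0 * α 1 * α 2 = 1 := by
      have h1 : (M 0 * M 1 * M 2).mulVec v = v := by rw [hprod, Matrix.one_mulVec]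
      have h2 : (M 0 * M 1 * M 2).mulVec v = (α 0 * α 1 * α 2) • v := by
        rw [← Matrix.mulVec_mulVec, ← Matrix.mulVec_mulVec, hα 2, Matrix.mulVec_smul, hα 1,
          smul_smul, Matrix.mulVec_smul, hα 0, smul_smul]
        rw [show α 2 * α 1 * α 0 = α 0 * α 1 * α 2 by ring]
      have h3 : (α 0 * α 1 * α 2 - 1) • v = 0 := by
        rw [sub_smul, one_smul, ← h2, h1, sub_self]
      rcases smul_eq_zero.mp h3 with h | h
      · exact sub_eq_zero.mp h
      · exact absurd h hv0
    -- squares less than one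
    have ht0 : (t 0)^2 < 1 := sq_lt_one_left _ _ _ (hbound 1) hT
    have ht1 : (t 1)^2 < 1 := by
      apply sq_lt_one_left (t 1) (t 0) (t 2) (hbound 0)
      ring_nf
      ring_nf at hT
      linarith
    have ht2 : (t 2)^2 < 1 := by
      apply sq_lt_one_left (t 2) (t 0) (t 1) (hbound 0)
      ring_nf
      ring_nf at hT
      linarith
    have hts : ∀ k, (t k)^2 < 1 := by
      intro k
      fin_cases k <;> assumption
    have hst : ∀ k, (α k).re = t k ∧ (α k).im^2 = 1 - (t k)^2 :=
      fun k => eig_structure (t k) (α k) (hts k) (hchar k)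
    have hαeq : ∀ k, α k = (t k : ℂ) + ((α k).im : ℝ) * Complex.I := by
      intro k
      apply Complex.ext <;> simp [(hst k).1]
    rw [hαeq 0, hαeq 1, hαeq 2] at hprodα
    exact triple_contradiction (t 0) (t 1) (t 2) _ _ _
      (hst 0).2 (hst 1).2 (hst 2).2 hprodα hT
end

section
/- Let M₁, M₂, M₃ ∈ SL(2, ℂ) satisfy M₁M₂M₃ = I, let t_k = (1/2)tr(M_k) with t_k ∈ [−1, 1], and set T = 1 − t₁² − t₂² − t₃² + 2t₁t₂t₃. Then the triple {M₁, M₂, M₃} is reducible (has a common invariant line in ℂ²) if and only if T = 0. -/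
open Matrix

private lemma key_identity (A B : Matrix (Fin 2) (Fin 2) ℂ) :
    (A*B - B*A).det = A.trace * B.trace * (A*B).trace - A.trace^2 * B.det - B.trace^2 * A.det
      - (A*B).trace^2 + 4 * A.det * B.det := by
  simp only [Matrix.det_fin_two, Matrix.trace_fin_two, Matrix.mul_apply, Fin.sum_univ_two,
    Matrix.sub_apply]
  ring

private lemma comm_identity_left (A B : Matrix (Fin 2) (Fin 2) ℂ) :
    A*(A*B - B*A) = A.trace • (A*B - B*A) - (A*B - B*A)*A := by
  have : A*(A*B - B*A) + (A*B - B*A)*A = A.trace • (A*B - B*A) := by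
    ext i j
    fin_cases i <;> fin_cases j <;>
      simp [Matrix.mul_apply, Fin.sum_univ_two, Matrix.trace_fin_two] <;> ring
  linear_combination (norm := abel) this

private lemma comm_identity_right (A B : Matrix (Fin 2) (Fin 2) ℂ) :
    B*(A*B - B*A) = B.trace • (A*B - B*A) - (A*B - B*A)*B := by
  have : B*(A*B - B*A) + (A*B - B*A)*B = B.trace • (A*B - B*A) := by
    ext i j
    fin_cases i <;> fin_cases j <;>
      simp [Matrix.mul_apply, Fin.sum_univ_two, Matrix.trace_fin_two] <;> ring
  linear_combination (norm := abel) this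

private lemma exists_eigvec (M : Matrix (Fin 2) (Fin 2) ℂ) :
    ∃ (μ : ℂ) (v : Fin 2 → ℂ), v ≠ 0 ∧ M.mulVec v = μ • v := by
  obtain ⟨μ, hμ⟩ := Module.End.exists_eigenvalue (Matrix.toLin' M)
  obtain ⟨v, hv⟩ := hμ.exists_hasEigenvector
  exact ⟨μ, v, hv.2, by simpa [Matrix.toLin'_apply] using hv.apply_eq_smul⟩

private lemma inv_invariant (A B : Matrix (Fin 2) (Fin 2) ℂ) (h1 : B * A = 1)
    (V : Submodule ℂ (Fin 2 → ℂ)) (hV : ∀ v ∈ V, A.mulVec v ∈ V) :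
    ∀ v ∈ V, B.mulVec v ∈ V := by
  have hBA : ∀ x : Fin 2 → ℂ, B.mulVec (A.mulVec x) = x := by
    intro x; rw [Matrix.mulVec_mulVec, h1, Matrix.one_mulVec]
  set f : V →ₗ[ℂ] V := (Matrix.mulVecLin A).restrict (fun v hv => hV v hv) with hf
  have hinj : Function.Injective f := by
    intro x y hxy
    have : A.mulVec x.1 = A.mulVec y.1 := congrArg Subtype.val hxy
    have := congrArg B.mulVec this
    rw [hBA, hBA] at this
    exact Subtype.ext this
  have hsurj : Function.Surjective f := (LinearMap.injective_iff_surjective).mp hinj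
  intro v hv
  obtain ⟨w, hw⟩ := hsurj ⟨v, hv⟩
  have hw' : A.mulVec w.1 = v := congrArg Subtype.val hw
  have : B.mulVec v = w.1 := by rw [← hw', hBA]
  rw [this]; exact w.2

/-- Goldman's criterion (reducibility): the triple is reducible iff T = 0. -/
theorem goldman_reducibility
    (M : Fin 3 → Matrix (Fin 2) (Fin 2) ℂ) (hdet : ∀ k, (M k).det = 1)
    (hprod : M 0 * M 1 * M 2 = 1)
    (t : Fin 3 → ℝ) (ht : ∀ k, (M k).trace = 2 * (t k : ℂ))
    (hbound : ∀ k, |t k| ≤ 1) :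
    (∃ V : Submodule ℂ (Fin 2 → ℂ), V ≠ ⊥ ∧ V ≠ ⊤ ∧
      ∀ k, ∀ v ∈ V, (M k).mulVec v ∈ V) ↔
      1 - (t 0)^2 - (t 1)^2 - (t 2)^2 + 2 * t 0 * t 1 * t 2 = 0 := by
  set A := M 0 with hA
  set B := M 1 with hB
  set C := A * B - B * A with hC
  have hP : (A * B) * (M 2) = 1 := hprod
  have hP2 : (M 2) * (A * B) = 1 := mul_eq_one_comm.mp hP
  -- trace of A*B equals trace of M 2
  have hadj : A * B = (M 2).adjugate := by
    have h1 : (M 2) * (M 2).adjugate = 1 := by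
      rw [Matrix.mul_adjugate, hdet 2, one_smul]
    calc A * B = (A * B) * ((M 2) * (M 2).adjugate) := by rw [h1, mul_one]
      _ = ((A * B) * (M 2)) * (M 2).adjugate := by simp only [mul_assoc]
      _ = (M 2).adjugate := by rw [hP, one_mul]
  have htrAB : (A * B).trace = 2 * (t 2 : ℂ) := by
    have h2 := ht 2
    rw [Matrix.trace_fin_two] at h2
    rw [hadj, Matrix.adjugate_fin_two, Matrix.trace_fin_two_of]
    linear_combination h2
  -- det C = 4 T
  have hdetC : C.det = 4 * ((1 - (t 0 : ℂ)^2 - (t 1 : ℂ)^2 - (t 2 : ℂ)^2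
      + 2 * (t 0 : ℂ) * (t 1 : ℂ) * (t 2 : ℂ))) := by
    rw [hC, key_identity, hdet 0, hdet 1, ht 0, ht 1, htrAB]
    ring
  constructor
  · rintro ⟨V, hbot, htop, hinv⟩
    -- V has dimension 1; pick nonzero vector spanning it
    obtain ⟨v, hvV, hv0⟩ := (Submodule.ne_bot_iff V).mp hbot
    have hle : Submodule.span ℂ {v} ≤ V := by
      rw [Submodule.span_le, Set.singleton_subset_iff]; exact hvV
    have hfr1 : Module.finrank ℂ (Submodule.span ℂ {v}) = 1 := finrank_span_singleton hv0
    have hfrV : Module.finrank ℂ V = 1 := by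
      have h2 : Module.finrank ℂ (Fin 2 → ℂ) = 2 := by simp
      have hlt : Module.finrank ℂ V < Module.finrank ℂ (Fin 2 → ℂ) :=
        Submodule.finrank_lt htop
      rw [h2] at hlt
      have hge : 1 ≤ Module.finrank ℂ V := by
        have := Submodule.finrank_mono hle
        omega
      omega
    have hVeq : Submodule.span ℂ {v} = V :=
      Submodule.eq_of_le_of_finrank_eq hle (by rw [hfr1, hfrV])
    obtain ⟨a, ha⟩ := Submodule.mem_span_singleton.mp (hVeq ▸ hinv 0 v hvV)
    obtain ⟨b, hb⟩ := Submodule.mem_span_singleton.mp (hVeq ▸ hinv 1 v hvV)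
    have hCv : C.mulVec v = 0 := by
      rw [hC, Matrix.sub_mulVec, ← Matrix.mulVec_mulVec, ← Matrix.mulVec_mulVec,
        ← hb, ← ha, Matrix.mulVec_smul, Matrix.mulVec_smul, ← ha, ← hb]
      rw [smul_comm]
      abel
    have hdet0 : C.det = 0 := Matrix.exists_mulVec_eq_zero_iff.mp ⟨v, hv0, hCv⟩
    rw [hdetC] at hdet0
    have h4 : (4 : ℂ) ≠ 0 := by norm_num
    have := (mul_eq_zero.mp hdet0).resolve_left h4
    exact_mod_cast this
  · intro hT
    have hdet0 : C.det = 0 := by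
      rw [hdetC]
      have : ((1 - (t 0)^2 - (t 1)^2 - (t 2)^2 + 2 * t 0 * t 1 * t 2 : ℝ) : ℂ) = 0 := by
        exact_mod_cast hT
      push_cast at this
      rw [show (1 - (t 0 : ℂ)^2 - (t 1 : ℂ)^2 - (t 2 : ℂ)^2
          + 2 * (t 0 : ℂ) * (t 1 : ℂ) * (t 2 : ℂ)) = 0 from by linear_combination this]
      ring
    by_cases hC0 : C = 0
    · -- commuting case
      have hcomm : A * B = B * A := by
        have := sub_eq_zero.mp hC0
        exact this
      obtain ⟨μ, hμ⟩ := Module.End.exists_eigenvalue (Matrix.toLin' A)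
      set E := Module.End.eigenspace (Matrix.toLin' A) μ with hE
      have hEbot : E ≠ ⊥ := hμ
      have hmemE : ∀ x, x ∈ E ↔ A.mulVec x = μ • x := by
        intro x
        rw [hE, Module.End.mem_eigenspace_iff, Matrix.toLin'_apply]
      by_cases hEtop : E = ⊤
      · -- A is scalar; use an eigenvector of B
        have hAsc : ∀ x : Fin 2 → ℂ, A.mulVec x = μ • x := by
          intro x; exact (hmemE x).mp (hEtop ▸ Submodule.mem_top)
        obtain ⟨ν, w, hw0, hwB⟩ := exists_eigvec B
        refine ⟨Submodule.span ℂ {w}, ?_, ?_, ?_⟩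
        · simpa [Submodule.span_singleton_eq_bot] using hw0
        · intro htop
          have h1 : Module.finrank ℂ (Submodule.span ℂ {w}) = 1 := finrank_span_singleton hw0
          rw [htop] at h1
          have h2 : Module.finrank ℂ (⊤ : Submodule ℂ (Fin 2 → ℂ)) = 2 := by simp
          omega
        · have inv0 : ∀ v ∈ Submodule.span ℂ {w}, A.mulVec v ∈ Submodule.span ℂ {w} := by
            intro v hv; rw [hAsc]; exact Submodule.smul_mem _ _ hv
          have inv1 : ∀ v ∈ Submodule.span ℂ {w}, B.mulVec v ∈ Submodule.span ℂ {w} := by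
            intro v hv
            obtain ⟨c, hc⟩ := Submodule.mem_span_singleton.mp hv
            rw [← hc, Matrix.mulVec_smul, hwB]
            exact Submodule.smul_mem _ _ (Submodule.smul_mem _ _ (Submodule.mem_span_singleton_self w))
          have invAB : ∀ v ∈ Submodule.span ℂ {w}, (A*B).mulVec v ∈ Submodule.span ℂ {w} := by
            intro v hv
            rw [← Matrix.mulVec_mulVec]
            exact inv0 _ (inv1 _ hv)
          have inv2 := inv_invariant (A*B) (M 2) hP2 _ invAB
          intro k; fin_cases k <;> assumption
      · -- E is a proper nonzero invariant subspace
        refine ⟨E, hEbot, hEtop, ?_⟩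
        have inv0 : ∀ v ∈ E, A.mulVec v ∈ E := by
          intro v hv
          rw [(hmemE v).mp hv]
          exact Submodule.smul_mem _ _ hv
        have inv1 : ∀ v ∈ E, B.mulVec v ∈ E := by
          intro v hv
          rw [hmemE]
          rw [Matrix.mulVec_mulVec, hcomm, ← Matrix.mulVec_mulVec, (hmemE v).mp hv,
            Matrix.mulVec_smul]
        have invAB : ∀ v ∈ E, (A*B).mulVec v ∈ E := by
          intro v hv
          rw [← Matrix.mulVec_mulVec]
          exact inv0 _ (inv1 _ hv)
        have inv2 := inv_invariant (A*B) (M 2) hP2 _ invAB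
        intro k; fin_cases k <;> assumption
    · -- C ≠ 0: use the range of C
      set V := LinearMap.range (Matrix.toLin' C) with hV
      have hmemV : ∀ x, C.mulVec x ∈ V := by
        intro x; exact ⟨x, Matrix.toLin'_apply C x⟩
      refine ⟨V, ?_, ?_, ?_⟩
      · intro h
        apply hC0
        have : Matrix.toLin' C = 0 := LinearMap.range_eq_bot.mp h
        have := Matrix.toLin'.injective (this.trans (map_zero Matrix.toLin').symm)
        exact this
      · intro h
        obtain ⟨v, hv0, hv⟩ := Matrix.exists_mulVec_eq_zero_iff.mpr hdet0
        have hsurj : Function.Surjective (Matrix.toLin' C) := LinearMap.range_eq_top.mp h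
        have hinj : Function.Injective (Matrix.toLin' C) :=
          (LinearMap.injective_iff_surjective).mpr hsurj
        apply hv0
        apply hinj
        rw [map_zero, Matrix.toLin'_apply, hv]
      · have inv0 : ∀ v ∈ V, A.mulVec v ∈ V := by
          rintro v ⟨x, rfl⟩
          rw [Matrix.toLin'_apply, Matrix.mulVec_mulVec, comm_identity_left,
            Matrix.sub_mulVec, Matrix.smul_mulVec, ← Matrix.mulVec_mulVec]
          exact Submodule.sub_mem _ (Submodule.smul_mem _ _ (hmemV x)) (hmemV _)
        have inv1 : ∀ v ∈ V, B.mulVec v ∈ V := by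
          rintro v ⟨x, rfl⟩
          rw [Matrix.toLin'_apply, Matrix.mulVec_mulVec, comm_identity_right,
            Matrix.sub_mulVec, Matrix.smul_mulVec, ← Matrix.mulVec_mulVec]
          exact Submodule.sub_mem _ (Submodule.smul_mem _ _ (hmemV x)) (hmemV _)
        have invAB : ∀ v ∈ V, (A*B).mulVec v ∈ V := by
          intro v hv
          rw [← Matrix.mulVec_mulVec]
          exact inv0 _ (inv1 _ hv)
        have inv2 := inv_invariant (A*B) (M 2) hP2 _ invAB
        intro k; fin_cases k <;> assumption
end

section
/- Let M be a 2×2 matrix of holomorphic functions on a neighborhood of p ∈ ℂ with holomorphic eigenvalue functions μ₁, μ₂ (so that det(M − μ_i·I) ≡ 0). Then ord_p(M − μ₁·I) = ord_p(M − μ₂·I), and ord_p(μ₁ − μ₂) ≥ ord_p(M − μ₁·I). -/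
open Matrix

/-- Vanishing order of a (analytic) function at a point, as an extended
natural number: the supremum of N such that all derivatives of index < N
vanish at p. -/
noncomputable def vord (f : ℂ → ℂ) (p : ℂ) : ℕ∞ :=
  sSup {N : ℕ∞ | ∀ k : ℕ, (k : ℕ∞) < N → iteratedDeriv k f p = 0}

/-- Vanishing order of a matrix-valued function at a point: the minimum of
the vanishing orders of its entries. -/
noncomputable def mord (M : ℂ → Matrix (Fin 2) (Fin 2) ℂ) (p : ℂ) : ℕ∞ :=
  ⨅ i : Fin 2, ⨅ j : Fin 2, vord (fun z => M z i j) p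

lemma vord_spec {f : ℂ → ℂ} {p : ℂ} {k : ℕ} (h : (k : ℕ∞) < vord f p) :
    iteratedDeriv k f p = 0 := by
  rw [vord, lt_sSup_iff] at h
  obtain ⟨N, hN, hk⟩ := h
  exact hN k hk

lemma le_vord {f : ℂ → ℂ} {p : ℂ} {N : ℕ∞}
    (h : ∀ k : ℕ, (k : ℕ∞) < N → iteratedDeriv k f p = 0) : N ≤ vord f p :=
  le_sSup h

lemma vord_congr {f g : ℂ → ℂ} {p : ℂ} (h : f =ᶠ[nhds p] g) : vord f p = vord g p := by
  unfold vord
  congr 1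
  ext N
  simp only [Set.mem_setOf_eq]
  constructor <;> intro H k hk
  · rw [← h.iteratedDeriv_eq k]; exact H k hk
  · rw [h.iteratedDeriv_eq k]; exact H k hk

lemma vord_neg (f : ℂ → ℂ) (p : ℂ) : vord (fun z => -(f z)) p = vord f p := by
  unfold vord
  congr 1
  ext N
  simp only [Set.mem_setOf_eq, iteratedDeriv_fun_neg, neg_eq_zero]

lemma iteratedDeriv_add_at {f g : ℂ → ℂ} {p : ℂ} (hf : AnalyticAt ℂ f p)
    (hg : AnalyticAt ℂ g p) (k : ℕ) :
    iteratedDeriv k (fun z => f z + g z) p =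
      iteratedDeriv k f p + iteratedDeriv k g p := by
  have hev : ∀ᶠ z in nhds p, AnalyticAt ℂ f z ∧ AnalyticAt ℂ g z :=
    hf.eventually_analyticAt.and hg.eventually_analyticAt
  obtain ⟨u, hut, huo, hpu⟩ := mem_nhds_iff.mp hev
  have hcf : ContDiffOn ℂ k f u := fun x hx =>
    (((hut hx)).1.contDiffAt.of_le le_top).contDiffWithinAt
  have hcg : ContDiffOn ℂ k g u := fun x hx =>
    ((hut hx).2.contDiffAt.of_le le_top).contDiffWithinAt
  have key : ∀ (h : ℂ → ℂ), iteratedDerivWithin k h u p = iteratedDeriv k h p := by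
    intro h
    rw [iteratedDerivWithin_eq_iteratedFDerivWithin, iteratedDeriv_eq_iteratedFDeriv,
      iteratedFDerivWithin_of_isOpen k huo hpu]
  rw [← key, ← key, ← key]
  exact iteratedDerivWithin_add hpu huo.uniqueDiffOn (hcf p hpu) (hcg p hpu)

/-- For a holomorphic 2×2 matrix M with holomorphic eigenvalue functions
μ₁, μ₂: ord_p(M − μ₁ I) = ord_p(M − μ₂ I) and
ord_p(μ₁ − μ₂) ≥ ord_p(M − μ₁ I). -/
theorem eigenvalue_order_estimates
    (M : ℂ → Matrix (Fin 2) (Fin 2) ℂ) (μ₁ μ₂ : ℂ → ℂ) (p : ℂ)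
    (hM : ∀ i j : Fin 2, AnalyticAt ℂ (fun z => M z i j) p)
    (hμ₁ : AnalyticAt ℂ μ₁ p) (hμ₂ : AnalyticAt ℂ μ₂ p)
    (heig₁ : ∀ᶠ z in nhds p, (M z - μ₁ z • (1 : Matrix (Fin 2) (Fin 2) ℂ)).det = 0)
    (heig₂ : ∀ᶠ z in nhds p, (M z - μ₂ z • (1 : Matrix (Fin 2) (Fin 2) ℂ)).det = 0)
    (htr : ∀ᶠ z in nhds p, μ₁ z + μ₂ z = (M z).trace) :
    mord (fun z => M z - μ₁ z • (1 : Matrix (Fin 2) (Fin 2) ℂ)) p =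
      mord (fun z => M z - μ₂ z • (1 : Matrix (Fin 2) (Fin 2) ℂ)) p ∧
    mord (fun z => M z - μ₁ z • (1 : Matrix (Fin 2) (Fin 2) ℂ)) p ≤
      vord (fun z => μ₁ z - μ₂ z) p := by
  set A : ℂ → Matrix (Fin 2) (Fin 2) ℂ := fun z => M z - μ₁ z • 1 with hA
  set B : ℂ → Matrix (Fin 2) (Fin 2) ℂ := fun z => M z - μ₂ z • 1 with hB
  -- entrywise relations
  have htr' : ∀ᶠ z in nhds p, μ₁ z + μ₂ z = M z 0 0 + M z 1 1 := by
    filter_upwards [htr] with z hz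
    rwa [Matrix.trace_fin_two] at hz
  have hAB00 : (fun z => A z 0 0) =ᶠ[nhds p] (fun z => -(B z 1 1)) := by
    filter_upwards [htr'] with z hz
    simp only [hA, hB, Matrix.sub_apply, Matrix.smul_apply, Matrix.one_apply_eq, smul_eq_mul,
      mul_one]
    linear_combination -hz
  have hAB11 : (fun z => A z 1 1) =ᶠ[nhds p] (fun z => -(B z 0 0)) := by
    filter_upwards [htr'] with z hz
    simp only [hA, hB, Matrix.sub_apply, Matrix.smul_apply, Matrix.one_apply_eq, smul_eq_mul,
      mul_one]
    linear_combination -hz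
  have hoff : ∀ i j : Fin 2, i ≠ j → (fun z => A z i j) = (fun z => B z i j) := by
    intro i j hij
    funext z
    simp [hA, hB, Matrix.one_apply_ne hij]
  -- vord of entries
  have v00 : vord (fun z => A z 0 0) p = vord (fun z => B z 1 1) p := by
    rw [vord_congr hAB00, vord_neg]
  have v11 : vord (fun z => A z 1 1) p = vord (fun z => B z 0 0) p := by
    rw [vord_congr hAB11, vord_neg]
  have v01 : vord (fun z => A z 0 1) p = vord (fun z => B z 0 1) p := by
    rw [hoff 0 1 (by decide)]
  have v10 : vord (fun z => A z 1 0) p = vord (fun z => B z 1 0) p := by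
    rw [hoff 1 0 (by decide)]
  have hmle : ∀ (C : ℂ → Matrix (Fin 2) (Fin 2) ℂ) (i j : Fin 2),
      mord C p ≤ vord (fun z => C z i j) p := by
    intro C i j
    exact le_trans (iInf_le _ i) (iInf_le _ j)
  have heq : mord A p = mord B p := by
    apply le_antisymm
    · apply le_iInf; intro i; apply le_iInf; intro j
      fin_cases i <;> fin_cases j
      · exact le_of_le_of_eq (hmle A 1 1) v11
      · exact le_of_le_of_eq (hmle A 0 1) v01
      · exact le_of_le_of_eq (hmle A 1 0) v10
      · exact le_of_le_of_eq (hmle A 0 0) v00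
    · apply le_iInf; intro i; apply le_iInf; intro j
      fin_cases i <;> fin_cases j
      · exact le_of_le_of_eq (hmle B 1 1) v00.symm
      · exact le_of_le_of_eq (hmle B 0 1) v01.symm
      · exact le_of_le_of_eq (hmle B 1 0) v10.symm
      · exact le_of_le_of_eq (hmle B 0 0) v11.symm
  refine ⟨heq, ?_⟩
  -- μ₁ - μ₂ = B 0 0 + B 1 1 eventually
  have hνB : (fun z => μ₁ z - μ₂ z) =ᶠ[nhds p] (fun z => B z 0 0 + B z 1 1) := by
    filter_upwards [htr'] with z hz
    simp only [hB, Matrix.sub_apply, Matrix.smul_apply, Matrix.one_apply_eq, smul_eq_mul, mul_one]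
    linear_combination hz
  rw [vord_congr hνB, heq]
  have hB00 : AnalyticAt ℂ (fun z => B z 0 0) p := by
    simp only [hB, Matrix.sub_apply, Matrix.smul_apply, Matrix.one_apply_eq, smul_eq_mul, mul_one]
    exact (hM 0 0).sub hμ₂
  have hB11 : AnalyticAt ℂ (fun z => B z 1 1) p := by
    simp only [hB, Matrix.sub_apply, Matrix.smul_apply, Matrix.one_apply_eq, smul_eq_mul, mul_one]
    exact (hM 1 1).sub hμ₂
  apply le_vord
  intro k hk
  rw [iteratedDeriv_add_at hB00 hB11 k,
    vord_spec (lt_of_lt_of_le hk (hmle B 0 0)),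
    vord_spec (lt_of_lt_of_le hk (hmle B 1 1)), add_zero]
end
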